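/- arXiv:2107.03219 — 2 statements merged into one kernel-verified Lean document; each statement's English description precedes it below -/
import Mathlib

section
/- In the setting of the inviscid representation p(u;x,t) = p₀(Y(t;u,x); X(t;u,x)) q(t;u,x): if there exists m ≥ 1 such that p₀(u;x)|u|^m → 0 uniformly in x as |u| → ∞, and Q has linear growth |Q(x,u,r)| ≤ K₂(1+|u|), then p(u;x,t)|u|^m → 0 uniformly in x as |u| → ∞, for each fixed t. -/
open Set

noncomputable section

abbrev E3 := EuclideanSpace ℝ (Fin 3)

def e3 (k : Fin 3) : E3 := EuclideanSpace.single k 1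

def pd (f : E3 → ℝ) (x : E3) (i : Fin 3) : ℝ := fderiv ℝ f x (e3 i)

def divU (Q : E3 → E3 → ℝ → E3) (x u : E3) (t : ℝ) : ℝ :=
  ∑ k, pd (fun w => Q x w t k) u k

open Real NNReal

/-! The weight `q` solves `q' = q ∇ᵤ·Q`, and the divergence of a `K₁`-Lipschitz field is at most
`3 K₁` in absolute value, so Grönwall gives `|q(t)| ≤ exp (3 K₁ t)`. Running the `Y`-equation
backwards in time, the linear growth of `Q` gives `|u| ≤ (|Y(t)| + 1) exp (K t)`: large initial
velocities stay large. Hence `|p| |u|^m` is at most a constant times `|p₀(Y(t))| |Y(t)|^m`, which is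
small uniformly in `x` once `|u|` is large. -/

theorem abs_pd_le_of_lipschitzWith {g : E3 → ℝ} {K : ℝ≥0} (hg : LipschitzWith K g)
    (u : E3) (i : Fin 3) : |pd g u i| ≤ K :=
  calc |pd g u i| ≤ ‖fderiv ℝ g u‖ * ‖e3 i‖ := (fderiv ℝ g u).le_opNorm (e3 i)
    _ ≤ K * 1 := by
      gcongr
      · exact norm_fderiv_le_of_lipschitz ℝ hg
      · simp [e3]
    _ = K := mul_one _

theorem abs_divU_le_of_lipschitzWith {Q : E3 → E3 → ℝ → E3} {x : E3} {s : ℝ} {K : ℝ≥0}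
    (hQ : LipschitzWith K (fun w => Q x w s)) (u : E3) : |divU Q x u s| ≤ 3 * K := by
  have hcoord (k : Fin 3) : LipschitzWith K (fun w => Q x w s k) :=
    LipschitzWith.of_dist_le_mul fun a b => (PiLp.dist_apply_le _ _ k).trans (hQ.dist_le_mul a b)
  calc |divU Q x u s| ≤ ∑ k, |pd (fun w => Q x w s k) u k| := Finset.abs_sum_le_sum_abs _ _
    _ ≤ ∑ _k : Fin 3, (K : ℝ) :=
      Finset.sum_le_sum fun k _ => abs_pd_le_of_lipschitzWith (hcoord k) u k
    _ = 3 * K := by simp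

theorem abs_le_exp_mul_of_hasDerivAt_mul {q d : ℝ → ℝ} {L t : ℝ} (ht : 0 ≤ t)
    (hq : ∀ s ∈ Icc 0 t, HasDerivAt q (q s * d s) s) (hd : ∀ s ∈ Icc 0 t, |d s| ≤ L) :
    |q t| ≤ |q 0| * exp (L * t) := by
  have hbound := norm_le_gronwallBound_of_norm_deriv_right_le (ε := 0)
    (fun s hs => (hq s hs).continuousAt.continuousWithinAt)
    (fun s hs => (hq s (Ico_subset_Icc_self hs)).hasDerivWithinAt) le_rfl
    (fun s hs => by
      rw [norm_mul, add_zero, mul_comm L]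
      exact mul_le_mul_of_nonneg_left (hd s (Ico_subset_Icc_self hs)) (norm_nonneg _))
    t (right_mem_Icc.2 ht)
  simpa [gronwallBound_ε0] using hbound

theorem norm_le_of_hasDerivAt_of_norm_le_linear {E : Type*} [NormedAddCommGroup E]
    [NormedSpace ℝ E] {Y F : ℝ → E} {K t : ℝ} (hK : 0 < K) (ht : 0 ≤ t)
    (hY : ∀ s ∈ Icc 0 t, HasDerivAt Y (F s) s) (hF : ∀ s ∈ Icc 0 t, ‖F s‖ ≤ K * (1 + ‖Y s‖)) :
    ‖Y 0‖ ≤ (‖Y t‖ + 1) * exp (K * t) := by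
  have hrev : ∀ s ∈ Icc 0 t, t - s ∈ Icc 0 t := fun s hs => ⟨by linarith [hs.2], by linarith [hs.1]⟩
  have hderiv : ∀ s ∈ Icc 0 t, HasDerivAt (fun s => Y (t - s)) (-F (t - s)) s := fun s hs => by
    simpa [Function.comp_def] using
      (hY (t - s) (hrev s hs)).scomp s ((hasDerivAt_id s).const_sub t)
  have hbound := norm_le_gronwallBound_of_norm_deriv_right_le (δ := ‖Y t‖) (ε := K)
    (fun s hs => (hderiv s hs).continuousAt.continuousWithinAt)
    (fun s hs => (hderiv s (Ico_subset_Icc_self hs)).hasDerivWithinAt) (by simp)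
    (fun s hs => by
      show ‖-F (t - s)‖ ≤ K * ‖Y (t - s)‖ + K
      rw [norm_neg]
      linarith [hF (t - s) (hrev s (Ico_subset_Icc_self hs))])
    t (right_mem_Icc.2 ht)
  rw [gronwallBound_of_K_ne_0 hK.ne', div_self hK.ne'] at hbound
  simp only [sub_self, sub_zero] at hbound
  linarith

def DecaysUniformly {E ι : Type*} [Norm E] (m : ℝ) (f : E → ι → ℝ) : Prop :=
  ∀ ε > 0, ∃ R : ℝ, ∀ u x, R ≤ ‖u‖ → |f u x| * ‖u‖ ^ m ≤ ε

theorem DecaysUniformly.of_abs_le_mul_comp {E F ι κ : Type*} [SeminormedAddGroup E]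
    [SeminormedAddGroup F] {m A B : ℝ} (hm : 0 ≤ m) (hB : 0 < B) {f : E → ι → ℝ} {g : F → κ → ℝ}
    (hg : DecaysUniformly m g) (φ : E → ι → F) (ψ : E → ι → κ)
    (hf : ∀ u x, |f u x| ≤ |g (φ u x) (ψ u x)| * A)
    (hφ : ∀ u x, ‖u‖ ≤ (‖φ u x‖ + 1) * B) :
    DecaysUniformly m f := by
  intro ε hε
  have hB2m : 0 < (2 * B) ^ m := rpow_pos_of_pos (by positivity) m
  set C := (|A| + 1) * (2 * B) ^ m
  have hC : 0 < C := by positivity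
  obtain ⟨R₀, hR₀⟩ := hg (ε / C) (div_pos hε hC)
  refine ⟨(max R₀ 1 + 1) * B, fun u x hu => ?_⟩
  have hφR : max R₀ 1 ≤ ‖φ u x‖ := by nlinarith [hφ u x]
  have hφ1 : 1 ≤ ‖φ u x‖ := (le_max_right _ _).trans hφR
  have hu_le : ‖u‖ ^ m ≤ (2 * B) ^ m * ‖φ u x‖ ^ m := by
    rw [← mul_rpow (by positivity) (by positivity)]
    exact rpow_le_rpow (by positivity) (by nlinarith [hφ u x]) hm
  calc |f u x| * ‖u‖ ^ m ≤ |g (φ u x) (ψ u x)| * (|A| + 1) * ((2 * B) ^ m * ‖φ u x‖ ^ m) := by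
        have hA : |f u x| ≤ |g (φ u x) (ψ u x)| * (|A| + 1) :=
          (hf u x).trans (by gcongr; linarith [le_abs_self A])
        gcongr
    _ = (|g (φ u x) (ψ u x)| * ‖φ u x‖ ^ m) * C := by ring
    _ ≤ ε / C * C := by gcongr; exact hR₀ _ _ ((le_max_left _ _).trans hφR)
    _ = ε := div_mul_cancel₀ ε hC.ne'

theorem inviscid_pdf_decay_general
    (T K₁ K₂ : ℝ) (m : ℝ) (hm : 1 ≤ m)
    (Q : E3 → E3 → ℝ → E3)
    (hLip : ∀ (x y u w : E3) (t : ℝ), t ∈ Icc 0 T →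
      ‖Q x u t - Q y w t‖ ≤ K₁ * (‖x - y‖ + ‖u - w‖))
    (hGrowth : ∀ (x u : E3) (t : ℝ), t ∈ Icc 0 T → ‖Q x u t‖ ≤ K₂ * (1 + ‖u‖))
    (t : ℝ) (ht : t ∈ Icc 0 T)
    -- the flow (X,Y,q), depending on the initial data (u,x)
    (X Y : E3 → E3 → ℝ → E3) (q : E3 → E3 → ℝ → ℝ)
    (hY0 : ∀ u x, Y u x 0 = u) (hq0 : ∀ u x, q u x 0 = 1)
    (hY : ∀ u x, ∀ s ∈ Icc 0 t, HasDerivAt (Y u x) (Q (X u x s) (Y u x s) (t - s)) s)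
    (hq : ∀ u x, ∀ s ∈ Icc 0 t,
      HasDerivAt (q u x) (q u x s * divU Q (X u x s) (Y u x s) (t - s)) s)
    (p : E3 → E3 → ℝ → ℝ) (p₀ : E3 → E3 → ℝ)
    (hrep : ∀ u x, p u x t = p₀ (Y u x t) (X u x t) * q u x t)
    (hdecay : ∀ ε > 0, ∃ R : ℝ, ∀ (u x : E3), R ≤ ‖u‖ → |p₀ u x| * ‖u‖ ^ m ≤ ε) :
    ∀ ε > 0, ∃ R : ℝ, ∀ (u x : E3), R ≤ ‖u‖ → |p u x t| * ‖u‖ ^ m ≤ ε := by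
  have hrev : ∀ s ∈ Icc 0 t, t - s ∈ Icc 0 T := fun s hs =>
    ⟨by linarith [hs.2], by linarith [hs.1, ht.2]⟩
  have hQ_lip (x : E3) (s : ℝ) (hs : s ∈ Icc 0 T) : LipschitzWith K₁.toNNReal (fun w => Q x w s) :=
    LipschitzWith.of_dist_le_mul fun a b => by
      simpa [dist_eq_norm] using (hLip x x a b s hs).trans
        (mul_le_mul_of_nonneg_right (le_coe_toNNReal K₁) (by positivity))
  have hq_le (u x : E3) : |q u x t| ≤ exp (3 * K₁.toNNReal * t) := by
    simpa [hq0] using abs_le_exp_mul_of_hasDerivAt_mul ht.1 (hq u x) fun s hs =>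
      abs_divU_le_of_lipschitzWith (hQ_lip _ _ (hrev s hs)) _
  have hY_ge (u x : E3) : ‖u‖ ≤ (‖Y u x t‖ + 1) * exp (max K₂ 1 * t) := by
    simpa [hY0] using norm_le_of_hasDerivAt_of_norm_le_linear (by positivity) ht.1 (hY u x)
      fun s hs => (hGrowth _ _ _ (hrev s hs)).trans (by gcongr; exact le_max_left _ _)
  refine DecaysUniformly.of_abs_le_mul_comp (A := exp (3 * K₁.toNNReal * t)) (by linarith)
    (exp_pos _) hdecay (fun u x => Y u x t) (fun u x => X u x t) (fun u x => ?_) hY_ge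
  rw [hrep, abs_mul]
  exact mul_le_mul_of_nonneg_left (hq_le u x) (abs_nonneg _)

/-- in the inviscid representation p(u;x,t) = p₀(Y(t);X(t))q(t), if
|u|^m p₀(u;x) → 0 uniformly in x as |u| → ∞ (m ≥ 1) and Q has linear growth, then
|u|^m p(u;x,t) → 0 uniformly in x as |u| → ∞, for each fixed t. -/
theorem inviscid_pdf_decay
    (T K₁ K₂ : ℝ) (hT : 0 < T) (m : ℝ) (hm : 1 ≤ m)
    (Q : E3 → E3 → ℝ → E3)
    (hLip : ∀ (x y u w : E3) (t : ℝ), t ∈ Icc 0 T →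
      ‖Q x u t - Q y w t‖ ≤ K₁ * (‖x - y‖ + ‖u - w‖))
    (hGrowth : ∀ (x u : E3) (t : ℝ), t ∈ Icc 0 T → ‖Q x u t‖ ≤ K₂ * (1 + ‖u‖))
    (hQC1 : ∀ (x : E3) (t : ℝ), ContDiff ℝ 1 (fun w => Q x w t))
    (t : ℝ) (ht : t ∈ Icc 0 T)
    -- the flow (X,Y,q), depending on the initial data (u,x)
    (X Y : E3 → E3 → ℝ → E3) (q : E3 → E3 → ℝ → ℝ)
    (hX0 : ∀ u x, X u x 0 = x) (hY0 : ∀ u x, Y u x 0 = u) (hq0 : ∀ u x, q u x 0 = 1)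
    (hX : ∀ u x, ∀ s ∈ Icc 0 t, HasDerivAt (X u x) (-(Y u x s)) s)
    (hY : ∀ u x, ∀ s ∈ Icc 0 t, HasDerivAt (Y u x) (Q (X u x s) (Y u x s) (t - s)) s)
    (hq : ∀ u x, ∀ s ∈ Icc 0 t,
      HasDerivAt (q u x) (q u x s * divU Q (X u x s) (Y u x s) (t - s)) s)
    (p : E3 → E3 → ℝ → ℝ) (p₀ : E3 → E3 → ℝ)
    (hrep : ∀ u x, p u x t = p₀ (Y u x t) (X u x t) * q u x t)
    (hdecay : ∀ ε > 0, ∃ R : ℝ, ∀ (u x : E3), R ≤ ‖u‖ → |p₀ u x| * ‖u‖ ^ m ≤ ε) :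
    ∀ ε > 0, ∃ R : ℝ, ∀ (u x : E3), R ≤ ‖u‖ → |p u x t| * ‖u‖ ^ m ≤ ε :=
  inviscid_pdf_decay_general T K₁ K₂ m hm Q hLip hGrowth t ht X Y q hY0 hq0 hY hq p p₀ hrep hdecay
end
end

section
/- Let a < 0 < b with a² > b, and set λ₁ = a + √(a²−b), λ₂ = a − √(a²−b). Then λ₁ and λ₂ are both negative, λ₂/λ₁ > 1, and s := ln(λ₂/λ₁)/(λ₁−λ₂) > 0; moreover the (1,1) entry of exp(Ls), namely (−λ₁e^{λ₁s} + λ₂e^{λ₂s})/(λ₂−λ₁), equals 0, where L = [[2a, b],[−1, 0]]. -/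
/-!
The matrix `L = [[2a, b], [-1, 0]]` has characteristic polynomial `x² - 2a x + b`, with the
distinct negative roots `λ₁ = a + √(a² - b)` and `λ₂ = a - √(a² - b)`; it is diagonalised by the
eigenvectors `(λ₁, -1)` and `(λ₂, -1)`, which gives
`exp(sL)₁₁ = (λ₁ e^{λ₁ s} - λ₂ e^{λ₂ s}) / (λ₁ - λ₂)`.
This vanishes exactly when `e^{(λ₁ - λ₂) s} = λ₂ / λ₁`, i.e. at `s = log(λ₂ / λ₁) / (λ₁ - λ₂)`.
-/

open Matrix Real

theorem Matrix.exp_smul_of_roots_apply_zero_zero {𝕂 : Type*} [RCLike 𝕂] {l₁ l₂ : 𝕂}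
    (h : l₁ ≠ l₂) (t : 𝕂) :
    NormedSpace.exp (t • !![l₁ + l₂, l₁ * l₂; -1, 0]) 0 0 =
      (l₁ * NormedSpace.exp (t * l₁) - l₂ * NormedSpace.exp (t * l₂)) / (l₁ - l₂) := by
  have hsub : l₁ - l₂ ≠ 0 := sub_ne_zero.2 h
  let P : Matrix (Fin 2) (Fin 2) 𝕂 := !![l₁, l₂; -1, -1]
  let Q : Matrix (Fin 2) (Fin 2) 𝕂 := (l₁ - l₂)⁻¹ • !![1, l₂; -1, -l₁]
  have hPQ : P * Q = 1 := by
    ext i j; fin_cases i <;> fin_cases j <;> simp [P, Q] <;> field_simp <;> ring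
  have hQP : Q * P = 1 := by
    ext i j; fin_cases i <;> fin_cases j <;> simp [P, Q] <;> field_simp <;> ring
  let U : (Matrix (Fin 2) (Fin 2) 𝕂)ˣ := ⟨P, Q, hPQ, hQP⟩
  have heig : !![l₁ + l₂, l₁ * l₂; -1, 0] * P = P * diagonal ![l₁, l₂] := by
    ext i j; fin_cases i <;> fin_cases j <;> simp [P] <;> ring
  have hconj : t • !![l₁ + l₂, l₁ * l₂; -1, 0] = U * diagonal (t • ![l₁, l₂]) * U⁻¹ := by
    rw [diagonal_smul, Matrix.mul_smul, Matrix.smul_mul, ← heig, Units.val_mk, Units.inv_mk,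
      Matrix.mul_assoc, hPQ, Matrix.mul_one]
  rw [hconj, exp_units_conj, exp_diagonal, diagonal_fin_two]
  simp [U, P, Q]
  field_simp
  ring

theorem add_sqrt_sq_sub_neg {a b : ℝ} (ha : a < 0) (hb : 0 < b) : a + √(a ^ 2 - b) < 0 := by
  have : √(a ^ 2 - b) < -a := (sqrt_lt' (by linarith)).2 (by nlinarith)
  linarith

theorem sub_sqrt_lt_add_sqrt {a b : ℝ} (hab : b < a ^ 2) : a - √(a ^ 2 - b) < a + √(a ^ 2 - b) := by
  have : 0 < √(a ^ 2 - b) := sqrt_pos.2 (by linarith)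
  linarith

theorem add_sqrt_mul_sub_sqrt {a b : ℝ} (hab : b ≤ a ^ 2) :
    (a + √(a ^ 2 - b)) * (a - √(a ^ 2 - b)) = b := by
  have := sq_sqrt (sub_nonneg.2 hab)
  linear_combination -this

theorem mul_exp_mul_eq_of_exp_sub_mul {l₁ l₂ s : ℝ} (hl₁ : l₁ ≠ 0)
    (hs : exp ((l₁ - l₂) * s) = l₂ / l₁) : l₁ * exp (l₁ * s) = l₂ * exp (l₂ * s) := by
  rw [show l₁ * s = (l₁ - l₂) * s + l₂ * s by ring, exp_add, hs]
  field_simp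

theorem exp_sub_mul_log_div_div_sub {l₁ l₂ : ℝ} (hne : l₁ ≠ l₂) (hpos : 0 < l₂ / l₁) :
    exp ((l₁ - l₂) * (log (l₂ / l₁) / (l₁ - l₂))) = l₂ / l₁ := by
  rw [mul_div_cancel₀ _ (sub_ne_zero.2 hne), exp_log hpos]

/-- for a < 0 < b with a² > b, both eigenvalues λ₁ = a + √(a²-b) and
λ₂ = a - √(a²-b) of L = [[2a,b],[-1,0]] are negative, λ₂/λ₁ > 1, the time
s = ln(λ₂/λ₁)/(λ₁-λ₂) is positive, and the (1,1) entry of exp(Ls) vanishes. -/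
theorem exp_entry_vanishes
    (a b : ℝ) (ha : a < 0) (hb : 0 < b) (hab : b < a ^ 2) :
    let L : Matrix (Fin 2) (Fin 2) ℝ := !![2 * a, b; -1, 0]
    let l₁ : ℝ := a + Real.sqrt (a ^ 2 - b)
    let l₂ : ℝ := a - Real.sqrt (a ^ 2 - b)
    let s : ℝ := Real.log (l₂ / l₁) / (l₁ - l₂)
    l₁ < 0 ∧ l₂ < 0 ∧ 1 < l₂ / l₁ ∧ 0 < s ∧
    (-l₁ * Real.exp (l₁ * s) + l₂ * Real.exp (l₂ * s)) / (l₂ - l₁) = 0 ∧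
    NormedSpace.exp (s • L) 0 0 = 0 := by
  intro L l₁ l₂ s
  have hl₁ : l₁ < 0 := add_sqrt_sq_sub_neg ha hb
  have hl₂₁ : l₂ < l₁ := sub_sqrt_lt_add_sqrt hab
  have hratio : 1 < l₂ / l₁ := (one_lt_div_of_neg hl₁).2 hl₂₁
  have hcross : l₁ * exp (l₁ * s) = l₂ * exp (l₂ * s) :=
    mul_exp_mul_eq_of_exp_sub_mul hl₁.ne
      (exp_sub_mul_log_div_div_sub hl₂₁.ne' (by linarith))
  have hL : L = !![l₁ + l₂, l₁ * l₂; -1, 0] := by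
    rw [add_sqrt_mul_sub_sqrt hab.le, show l₁ + l₂ = 2 * a by ring]
  refine ⟨hl₁, hl₂₁.trans hl₁, hratio, div_pos (log_pos hratio) (sub_pos.2 hl₂₁), ?_, ?_⟩
  · rw [neg_mul, hcross, neg_add_cancel, zero_div]
  · rw [hL, exp_smul_of_roots_apply_zero_zero hl₂₁.ne', ← exp_eq_exp_ℝ, mul_comm s, mul_comm s,
      hcross, sub_self, zero_div]
end
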